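/- arXiv:2107.13107 — 3 statements merged into one kernel-verified Lean document; each statement's English description precedes it below -/
import Mathlib

section
/- Let Π : Matrix (Fin n) (Fin n) ℝ be idempotent (Π · Π = Π) with Π ≠ 0 and Π ≠ I. Then ‖I − Π‖₂ = ‖Π‖₂, i.e., a nontrivial oblique projector and its complementary projector have equal spectral norm. -/
open Matrix

/-!
Write `x = u + v` with `u = f x` and `v = x - f x`, so `f u = u` and `f v = 0`. Since `f` fixes
every `u - c • v`, `‖u‖ ≤ ‖f‖ · dist(u, 𝕜 ∙ v)`, which reads `‖u‖²‖v‖² ≤ ‖f‖² G(u, v)` with the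
Gram determinant `G(u, v) = ‖u‖²‖v‖² - ‖⟪u, v⟫‖²`. As `G(u, v) = G(u, u + v) ≤ ‖u‖²‖x‖²`, this
gives `‖v‖ ≤ ‖f‖‖x‖`, i.e. `‖1 - f‖ ≤ ‖f‖`; the reverse inequality is the same one for the
idempotent `1 - f`.
-/

theorem IsIdempotentElem.one_le_norm {R : Type*} [NonUnitalNormedRing R] {p : R}
    (hp : IsIdempotentElem p) (h0 : p ≠ 0) : 1 ≤ ‖p‖ := by
  have hpos : 0 < ‖p‖ := norm_pos_iff.mpr h0
  have : ‖p‖ ≤ ‖p‖ * ‖p‖ := by simpa [hp.eq] using norm_mul_le p p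
  nlinarith

section InnerProductSpace

variable {𝕜 E : Type*} [RCLike 𝕜] [NormedAddCommGroup E] [InnerProductSpace 𝕜 E]

local notation "⟪" x ", " y "⟫" => inner 𝕜 x y

theorem sq_norm_mul_sq_norm_sub_sq_norm_inner_le (u v : E) :
    ‖u‖ ^ 2 * ‖v‖ ^ 2 - ‖⟪u, v⟫‖ ^ 2 ≤ ‖u‖ ^ 2 * ‖u + v‖ ^ 2 := by
  rw [norm_add_sq (𝕜 := 𝕜), ← RCLike.normSq_eq_def', RCLike.normSq_apply]
  nlinarith [sq_nonneg (‖u‖ ^ 2 + RCLike.re ⟪u, v⟫), sq_nonneg (RCLike.im ⟪u, v⟫)]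

theorem sq_norm_mul_sq_norm_starProjection_orthogonal_singleton (u v : E) :
    ‖v‖ ^ 2 * ‖(𝕜 ∙ v)ᗮ.starProjection u‖ ^ 2 = ‖u‖ ^ 2 * ‖v‖ ^ 2 - ‖⟪u, v⟫‖ ^ 2 := by
  rcases eq_or_ne v 0 with rfl | hv
  · simp
  have hpyth := (𝕜 ∙ v).norm_sq_eq_add_norm_sq_starProjection u
  rw [Submodule.starProjection_singleton, norm_smul, norm_div, norm_inner_symm] at hpyth
  have : ‖v‖ ≠ 0 := norm_ne_zero_iff.mpr hv
  simp only [RCLike.norm_ofReal, abs_pow, abs_norm] at hpyth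
  rw [hpyth]
  field_simp
  ring

theorem ContinuousLinearMap.sq_norm_mul_sq_norm_le_of_apply_eq_self_of_apply_eq_zero
    (f : E →L[𝕜] E) {u v : E} (hu : f u = u) (hv : f v = 0) :
    ‖u‖ ^ 2 * ‖v‖ ^ 2 ≤ ‖f‖ ^ 2 * (‖u‖ ^ 2 * ‖v‖ ^ 2 - ‖⟪u, v⟫‖ ^ 2) := by
  set w := (𝕜 ∙ v)ᗮ.starProjection u
  have hfw : f w = u := by
    simp [w, Submodule.starProjection_singleton, hu, hv]
  have hle : ‖u‖ ≤ ‖f‖ * ‖w‖ := hfw ▸ f.le_opNorm w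
  calc ‖u‖ ^ 2 * ‖v‖ ^ 2 ≤ (‖f‖ * ‖w‖) ^ 2 * ‖v‖ ^ 2 := by gcongr
    _ = ‖f‖ ^ 2 * (‖v‖ ^ 2 * ‖w‖ ^ 2) := by ring
    _ = _ := by rw [sq_norm_mul_sq_norm_starProjection_orthogonal_singleton]

theorem ContinuousLinearMap.norm_one_sub_le_norm_of_isIdempotentElem {f : E →L[𝕜] E}
    (hf : IsIdempotentElem f) (h0 : f ≠ 0) : ‖1 - f‖ ≤ ‖f‖ := by
  refine opNorm_le_bound _ (norm_nonneg f) fun x => ?_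
  set u := f x
  set v := x - f x
  have hx : u + v = x := add_sub_cancel _ _
  have hu : f u = u := congr($hf.eq x)
  have hv : f v = 0 := by rw [map_sub, hu, sub_self]
  change ‖v‖ ≤ ‖f‖ * ‖x‖
  rcases eq_or_ne u 0 with hu0 | hu0
  · rw [← hx, hu0, zero_add]
    exact le_mul_of_one_le_left (norm_nonneg v) (hf.one_le_norm h0)
  have hsq : ‖u‖ ^ 2 * ‖v‖ ^ 2 ≤ ‖u‖ ^ 2 * (‖f‖ * ‖x‖) ^ 2 :=
    calc ‖u‖ ^ 2 * ‖v‖ ^ 2 ≤ ‖f‖ ^ 2 * (‖u‖ ^ 2 * ‖v‖ ^ 2 - ‖⟪u, v⟫‖ ^ 2) :=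
          f.sq_norm_mul_sq_norm_le_of_apply_eq_self_of_apply_eq_zero hu hv
      _ ≤ ‖f‖ ^ 2 * (‖u‖ ^ 2 * ‖x‖ ^ 2) := by
          rw [← hx]; gcongr; exact sq_norm_mul_sq_norm_sub_sq_norm_inner_le u v
      _ = ‖u‖ ^ 2 * (‖f‖ * ‖x‖) ^ 2 := by ring
  have hpos : 0 < ‖u‖ ^ 2 := by positivity
  exact pow_le_pow_iff_left₀ (norm_nonneg v) (by positivity) two_ne_zero |>.mp
    (le_of_mul_le_mul_left hsq hpos)

theorem ContinuousLinearMap.norm_one_sub_eq_norm_of_isIdempotentElem {f : E →L[𝕜] E}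
    (hf : IsIdempotentElem f) (h0 : f ≠ 0) (h1 : f ≠ 1) : ‖1 - f‖ = ‖f‖ := by
  refine le_antisymm (norm_one_sub_le_norm_of_isIdempotentElem hf h0) ?_
  simpa using norm_one_sub_le_norm_of_isIdempotentElem hf.one_sub (sub_ne_zero.mpr h1.symm)

end InnerProductSpace

noncomputable def matrixSpectralNorm {m n : ℕ} (A : Matrix (Fin m) (Fin n) ℝ) : ℝ :=
  ‖LinearMap.toContinuousLinearMap (Matrix.toEuclideanLin A)‖

theorem matrixSpectralNorm_eq_norm_toEuclideanCLM {n : ℕ} (A : Matrix (Fin n) (Fin n) ℝ) :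
    matrixSpectralNorm A = ‖toEuclideanCLM (𝕜 := ℝ) A‖ := rfl

/-- A nontrivial idempotent (oblique projector) and its complementary projector
have equal spectral norm. -/
theorem spectralNorm_one_sub_projector {n : ℕ}
    (P : Matrix (Fin n) (Fin n) ℝ)
    (hidem : P * P = P) (h0 : P ≠ 0) (h1 : P ≠ 1) :
    matrixSpectralNorm ((1 : Matrix (Fin n) (Fin n) ℝ) - P) = matrixSpectralNorm P := by
  rw [matrixSpectralNorm_eq_norm_toEuclideanCLM, matrixSpectralNorm_eq_norm_toEuclideanCLM,
    map_sub, map_one]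
  exact ContinuousLinearMap.norm_one_sub_eq_norm_of_isIdempotentElem
    (IsIdempotentElem.map hidem toEuclideanCLM)
    ((map_ne_zero_iff _ toEuclideanCLM.injective).mpr h0)
    ((map_ne_one_iff _ toEuclideanCLM.injective).mpr h1)
end

section
/- Let 1 ≤ ℓ ≤ n, let Q : Matrix (Fin n) (Fin ℓ) ℝ have orthonormal columns (Qᵀ Q = I_ℓ), let P : Matrix (Fin n) (Fin ℓ) ℝ be a selection matrix, and assume Pᵀ Q is invertible. Then ‖Q (Pᵀ Q)⁻¹ Pᵀ‖₂ = ‖(Pᵀ Q)⁻¹‖₂. -/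
open Matrix

/-- `P` is a selection matrix: its columns are distinct columns of the identity matrix. -/
def IsSelectionMatrix {n ℓ : ℕ} (P : Matrix (Fin n) (Fin ℓ) ℝ) : Prop :=
  ∃ p : Fin ℓ → Fin n, Function.Injective p ∧
    ∀ i a, P i a = if i = p a then 1 else 0

/-!
Both `Q` and `P` have orthonormal columns, so `Q` is an isometry and `Pᵀ` a coisometry. Multiplying
on the left by an isometry or on the right by a coisometry does not change the spectral norm, by the
C⋆-identity `‖AᴴA‖ = ‖A‖²`.
-/

open scoped Matrix.Norms.L2Operator

namespace Matrix

variable {𝕜 : Type*} [RCLike 𝕜] {l m n : Type*} [Fintype l] [Fintype m] [Fintype n]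
  [DecidableEq l] [DecidableEq n]

lemma l2_opNorm_mul_of_conjTranspose_mul_self_eq_one {A : Matrix m n 𝕜} (hA : Aᴴ * A = 1)
    (B : Matrix n l 𝕜) : ‖A * B‖ = ‖B‖ := by
  have h := l2_opNorm_conjTranspose_mul_self (A * B)
  rw [conjTranspose_mul, Matrix.mul_assoc, ← Matrix.mul_assoc Aᴴ, hA, Matrix.one_mul,
    l2_opNorm_conjTranspose_mul_self] at h
  exact (mul_self_inj (norm_nonneg _) (norm_nonneg _)).mp h.symm

lemma l2_opNorm_mul_conjTranspose_of_conjTranspose_mul_self_eq_one [DecidableEq m]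
    {A : Matrix m n 𝕜} (hA : Aᴴ * A = 1) (B : Matrix l n 𝕜) :
    ‖B * Aᴴ‖ = ‖B‖ := by
  rw [← l2_opNorm_conjTranspose, conjTranspose_mul, conjTranspose_conjTranspose,
    l2_opNorm_mul_of_conjTranspose_mul_self_eq_one hA, l2_opNorm_conjTranspose]

end Matrix

lemma matrixSpectralNorm_eq_l2_opNorm {m n : ℕ} (A : Matrix (Fin m) (Fin n) ℝ) :
    matrixSpectralNorm A = ‖A‖ :=
  (l2_opNorm_def A).symm

lemma IsSelectionMatrix.transpose_mul_self {n ℓ : ℕ} {P : Matrix (Fin n) (Fin ℓ) ℝ}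
    (hP : IsSelectionMatrix P) : Pᵀ * P = 1 := by
  obtain ⟨p, hp, hP⟩ := hP
  ext a b
  simp [mul_apply, hP, one_apply, hp.eq_iff, eq_comm]

theorem spectralNorm_oblique_projector_general {n ℓ : ℕ}
    (Q P : Matrix (Fin n) (Fin ℓ) ℝ)
    (hQ : Qᵀ * Q = (1 : Matrix (Fin ℓ) (Fin ℓ) ℝ))
    (hP : IsSelectionMatrix P) :
    matrixSpectralNorm (Q * (Pᵀ * Q)⁻¹ * Pᵀ) = matrixSpectralNorm ((Pᵀ * Q)⁻¹) := by
  rw [← conjTranspose_eq_transpose_of_trivial] at hQ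
  have hPP : Pᴴ * P = 1 := by
    rw [conjTranspose_eq_transpose_of_trivial]
    exact hP.transpose_mul_self
  rw [matrixSpectralNorm_eq_l2_opNorm, matrixSpectralNorm_eq_l2_opNorm, Matrix.mul_assoc,
    l2_opNorm_mul_of_conjTranspose_mul_self_eq_one hQ, ← conjTranspose_eq_transpose_of_trivial P,
    l2_opNorm_mul_conjTranspose_of_conjTranspose_mul_self_eq_one hPP]

/-- For `Q` with orthonormal columns and a selection matrix `P` with `Pᵀ Q` invertible,
`‖Q (Pᵀ Q)⁻¹ Pᵀ‖₂ = ‖(Pᵀ Q)⁻¹‖₂`. -/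
theorem spectralNorm_oblique_projector {n ℓ : ℕ} (hℓ : 1 ≤ ℓ) (hℓn : ℓ ≤ n)
    (Q P : Matrix (Fin n) (Fin ℓ) ℝ)
    (hQ : Qᵀ * Q = (1 : Matrix (Fin ℓ) (Fin ℓ) ℝ))
    (hP : IsSelectionMatrix P)
    (hinv : Invertible (Pᵀ * Q)) :
    matrixSpectralNorm (Q * (Pᵀ * Q)⁻¹ * Pᵀ) = matrixSpectralNorm ((Pᵀ * Q)⁻¹) :=
  spectralNorm_oblique_projector_general Q P hQ hP
end

section
/- (Structure preservation: the interpolatory Tucker approximation reproduces the selected entries exactly.) Let N ≥ 1 and 1 ≤ ℓ ≤ n, let X : (Fin N → Fin n) → ℝ be an order-N tensor, and for each j = 1, …, N let p_j : Fin ℓ → Fin n be injective and let A_j : Matrix (Fin n) (Fin ℓ) ℝ satisfy A_j (p_j a) b = 1 if a = b and 0 otherwise (i.e., the rows of A_j indexed by the selected indices form the ℓ×ℓ identity). Define the core G : (Fin N → Fin ℓ) → ℝ by G(a) = X(fun j => p_j (a j)), and the approximation X̂ = G ×₁ A₁ ×₂ A₂ ⋯ ×_N A_N. Then for every a : Fin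 N → Fin ℓ, X̂(fun j => p_j (a j)) = X(fun j => p_j (a j)). -/
open Matrix Finset

/-- The full Tucker product `G ×₁ A₁ ×₂ A₂ ⋯ ×_N A_N` of a core tensor
`G : (Fin N → Fin ℓ) → ℝ` with factor matrices `A j : Matrix (Fin n) (Fin ℓ) ℝ`:
`(G ×₁ A₁ ⋯ ×_N A_N)(i) = ∑_a G(a) ∏_j A_j (i j) (a j)`. -/
noncomputable def tuckerProd {N n ℓ : ℕ} (G : (Fin N → Fin ℓ) → ℝ)
    (A : Fin N → Matrix (Fin n) (Fin ℓ) ℝ) : (Fin N → Fin n) → ℝ :=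
  fun i => ∑ a : Fin N → Fin ℓ, G a * ∏ j : Fin N, A j (i j) (a j)

theorem tuckerProd_apply_of_rows_eq_single {N n ℓ : ℕ} (G : (Fin N → Fin ℓ) → ℝ)
    (A : Fin N → Matrix (Fin n) (Fin ℓ) ℝ) (i : Fin N → Fin n) (a : Fin N → Fin ℓ)
    (hA : ∀ j b, A j (i j) b = if a j = b then 1 else 0) :
    tuckerProd G A i = G a := by
  have hprod : ∀ b, ∏ j, A j (i j) (b j) = if a = b then 1 else 0 := fun b => by
    simp only [hA, Finset.prod_boole, Finset.mem_univ, true_implies, funext_iff]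
  simp only [tuckerProd, hprod, mul_ite, mul_one, mul_zero, Fintype.sum_ite_eq]

theorem tucker_structure_preservation_general {N n ℓ : ℕ}
    (X : (Fin N → Fin n) → ℝ)
    (p : Fin N → Fin ℓ → Fin n)
    (A : Fin N → Matrix (Fin n) (Fin ℓ) ℝ)
    (hA : ∀ j a b, A j (p j a) b = if a = b then 1 else 0) :
    ∀ a : Fin N → Fin ℓ,
      tuckerProd (fun b => X (fun j => p j (b j))) A (fun j => p j (a j)) =
        X (fun j => p j (a j)) :=
  fun a => tuckerProd_apply_of_rows_eq_single _ A _ a fun j => hA j (a j)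

/-- Structure preservation: if the rows of each factor matrix `A_j` indexed by the
selected indices `p_j` form the `ℓ×ℓ` identity, and the core is
`G(a) = X(j ↦ p_j(a j))`, then the Tucker approximation
`X̂ = G ×₁ A₁ ⋯ ×_N A_N` reproduces the selected entries of `X` exactly. -/
theorem tucker_structure_preservation {N n ℓ : ℕ}
    (hN : 1 ≤ N) (hℓ : 1 ≤ ℓ) (hℓn : ℓ ≤ n)
    (X : (Fin N → Fin n) → ℝ)
    (p : Fin N → Fin ℓ → Fin n) (hp : ∀ j, Function.Injective (p j))
    (A : Fin N → Matrix (Fin n) (Fin ℓ) ℝ)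
    (hA : ∀ j a b, A j (p j a) b = if a = b then 1 else 0) :
    ∀ a : Fin N → Fin ℓ,
      tuckerProd (fun b => X (fun j => p j (b j))) A (fun j => p j (a j)) =
        X (fun j => p j (a j)) :=
  tucker_structure_preservation_general X p A hA
end
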